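/- arXiv:1503.04046 — 3 statements merged into one kernel-verified Lean document; each statement's English description precedes it below -/
import Mathlib

section
/- Let G be a nontrivial finite group with trivial solvable radical, let M₁, …, M_r be the distinct minimal normal subgroups of G, suppose each M_i is isomorphic to a direct product of n_i copies of a nonabelian finite simple group T_i, and set n = n₁ + ⋯ + n_r and k_i = k*(T_i). If c₂ > 0 is a constant such that log|Aut(T)| < c₂ · (log k*(T))² · log log k*(T) holds for every nonabelian finite simple group T, then log|G| < n · log n + c₂ · Σ_{i=1}^{r} n_i · (log k_i)² · log log k_i. -/
/-!
Every minimal normal subgroup `M i ≅ T_i^{n_i}` is nonabelian, so the joint centralizer of the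
`M i` is trivial: being normal, it would otherwise contain some `M j` and hence centralize it.
Thus conjugation embeds `G` into `∏ i, Aut(T_i^{n_i})`. An automorphism of
`T^m`, `T` nonabelian simple, permutes the coordinate factors, so `|Aut(T^m)| ≤ m^m |Aut T|^m`.
Taking logarithms, `∑ n_i log n_i ≤ n log n` and the hypothesis on `c₂` bounds the rest.
-/

/-- `k*(T)`: the number of orbits of the natural action of `Aut(T)` on `T`. -/
noncomputable def numAutOrbits (T : Type*) [Group T] : ℕ :=
  Nat.card (Quotient (MulAction.orbitRel (MulAut T) T))

/-- `N` is a minimal normal subgroup of `G`. -/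
def IsMinimalNormal {G : Type*} [Group G] (N : Subgroup G) : Prop :=
  N ≠ ⊥ ∧ N.Normal ∧ ∀ K : Subgroup G, K.Normal → K ≤ N → K ≠ ⊥ → K = N


theorem mul_comm_of_mulEquiv_pi {H ι T : Type*} [DecidableEq ι] [MulOneClass H] [MulOneClass T]
    (e : H ≃* (ι → T)) (hH : ∀ x y : H, x * y = y * x) (i : ι) (a b : T) : a * b = b * a := by
  have hpi (x y : ι → T) : x * y = y * x :=
    e.symm.injective (by rw [map_mul, map_mul, hH])
  simpa using congrFun (hpi (Pi.mulSingle i a) (Pi.mulSingle i b)) i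

theorem pos_of_mulEquiv_fin_pi {G T : Type*} [Group G] [Group T] {M : Subgroup G} {m : ℕ}
    (hM : M ≠ ⊥) (e : M ≃* (Fin m → T)) : 0 < m := by
  refine Nat.pos_of_ne_zero fun hm => hM ?_
  subst hm
  have := e.toEquiv.subsingleton
  exact M.eq_bot_of_subsingleton

section MinimalNormal

variable {G : Type*} [Group G] [Finite G]

theorem exists_isMinimalNormal_le {K : Subgroup G} (hK : K.Normal) (hne : K ≠ ⊥) :
    ∃ N, IsMinimalNormal N ∧ N ≤ K := by
  obtain ⟨N, ⟨hN, hNne, hNK⟩, hmin⟩ := (wellFounded_lt (α := Subgroup G)).has_min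
    {N | N.Normal ∧ N ≠ ⊥ ∧ N ≤ K} ⟨K, hK, hne, le_rfl⟩
  refine ⟨N, ⟨hNne, hN, fun L hL hLN hLne => ?_⟩, hNK⟩
  by_contra hLN'
  exact hmin L ⟨hL, hLne, hLN.trans hNK⟩ (lt_of_le_of_ne hLN hLN')

theorem exists_isMinimalNormal [Nontrivial G] : ∃ N : Subgroup G, IsMinimalNormal N :=
  (exists_isMinimalNormal_le Subgroup.normal_top top_ne_bot).imp fun _ h => h.1

theorem iInf_centralizer_eq_bot {ι : Type*} (M : ι → Subgroup G) [∀ i, (M i).Normal]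
    (hall : ∀ N, IsMinimalNormal N → ∃ i, N = M i)
    (hM : ∀ i, ¬ ∀ a b : M i, a * b = b * a) :
    ⨅ i, Subgroup.centralizer (M i : Set G) = ⊥ := by
  by_contra hne
  obtain ⟨N, hN, hNC⟩ :=
    exists_isMinimalNormal_le (Subgroup.normal_iInf_normal fun _ => inferInstance) hne
  obtain ⟨j, rfl⟩ := hall N hN
  refine hM j fun a b => Subtype.ext ?_
  exact Subgroup.mem_centralizer_iff.1
    (iInf_le (fun i => Subgroup.centralizer (M i : Set G)) j (hNC b.2)) a a.2

theorem card_le_prod_card_mulAut {ι : Type*} [Fintype ι] (M : ι → Subgroup G)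
    [∀ i, (M i).Normal] (hM : ⨅ i, Subgroup.centralizer (M i : Set G) = ⊥) :
    Nat.card G ≤ ∏ i, Nat.card (MulAut (M i)) := by
  let conj : G →* ∀ i, MulAut (M i) := MonoidHom.pi fun _ => MulAut.conjNormal
  have hconj : Function.Injective conj := by
    refine (injective_iff_map_eq_one conj).2 fun g hg => ?_
    rw [← Subgroup.mem_bot, ← hM, Subgroup.mem_iInf]
    refine fun i => Subgroup.mem_centralizer_iff.2 fun x hx => ?_
    have hgx := congrArg Subtype.val (DFunLike.congr_fun (congrFun hg i) ⟨x, hx⟩)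
    simp only [conj, MonoidHom.pi_apply, MulAut.conjNormal_apply, Pi.one_apply,
      MulAut.one_apply] at hgx
    exact (mul_inv_eq_iff_eq_mul.1 hgx).symm
  rw [← Nat.card_pi]
  exact Nat.card_le_card_of_injective conj hconj

end MinimalNormal

theorem IsSimpleGroup.center_eq_bot {T : Type*} [Group T] [IsSimpleGroup T]
    (hT : ¬ ∀ a b : T, a * b = b * a) : Subgroup.center T = ⊥ :=
  (Subgroup.center T).normal_of_characteristic.eq_bot_or_eq_top.resolve_right fun h =>
    hT fun a b => Subgroup.mem_center_iff.1 (h ▸ Subgroup.mem_top b) a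

section PiSimple

variable {ι T : Type*} [DecidableEq ι] [Group T]

theorem range_mulSingle_normal (a : ι) : (MonoidHom.mulSingle (fun _ => T) a).range.Normal := by
  refine ⟨?_⟩
  rintro _ ⟨s, rfl⟩ g
  refine ⟨g a * s * (g a)⁻¹, funext fun c => ?_⟩
  rcases eq_or_ne c a with rfl | hc
  · simp
  · simp [Pi.mulSingle_eq_of_ne hc]

theorem card_range_mulSingle (a : ι) :
    Nat.card (MonoidHom.mulSingle (fun _ => T) a).range = Nat.card T :=
  (Nat.card_congr (MonoidHom.ofInjective (Pi.mulSingle_injective (M := fun _ => T) a)).toEquiv).symm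

theorem eq_mulSingle_of_mem_range_mulSingle {b : ι} {y : ι → T}
    (hy : y ∈ (MonoidHom.mulSingle (fun _ => T) b).range) : y = Pi.mulSingle b (y b) := by
  obtain ⟨s, rfl⟩ := hy
  simp

variable [IsSimpleGroup T]

/-- The commutator of `x` with `Pi.mulSingle b t` is concentrated in coordinate `b`, and is
nontrivial for a suitable `t` because `T` has trivial center. -/
theorem range_mulSingle_le_of_normal (hT : ¬ ∀ a b : T, a * b = b * a)
    {N : Subgroup (ι → T)} (hN : N.Normal) {x : ι → T} (hx : x ∈ N) {b : ι} (hxb : x b ≠ 1) :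
    (MonoidHom.mulSingle (fun _ => T) b).range ≤ N := by
  obtain ⟨t, ht⟩ : ∃ t, t * x b ≠ x b * t := by
    by_contra! h
    exact hxb (by simpa [IsSimpleGroup.center_eq_bot hT] using Subgroup.mem_center_iff.2 h)
  have hcomm : Pi.mulSingle b (t * x b * t⁻¹ * (x b)⁻¹) ∈ N := by
    convert mul_mem (hN.conj_mem x hx (Pi.mulSingle b t)) (inv_mem hx) using 1
    funext c
    rcases eq_or_ne c b with rfl | hc
    · simp
    · simp [Pi.mulSingle_eq_of_ne hc]
  have htop : N.comap (MonoidHom.mulSingle (fun _ => T) b) = ⊤ := by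
    refine (hN.comap _).eq_bot_or_eq_top.resolve_left fun hbot => ht ?_
    have h1 : t * x b * t⁻¹ * (x b)⁻¹ ∈ N.comap (MonoidHom.mulSingle (fun _ => T) b) := hcomm
    rw [hbot, Subgroup.mem_bot, mul_inv_eq_one, mul_inv_eq_iff_eq_mul] at h1
    exact h1
  rintro _ ⟨s, rfl⟩
  exact Subgroup.mem_comap.1 (htop ▸ Subgroup.mem_top s)

variable [Finite ι] [Finite T]

theorem exists_map_range_mulSingle_eq (hT : ¬ ∀ a b : T, a * b = b * a)
    (φ : MulAut (ι → T)) (a : ι) :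
    ∃ b, (MonoidHom.mulSingle (fun _ => T) a).range.map φ.toMonoidHom =
      (MonoidHom.mulSingle (fun _ => T) b).range := by
  obtain ⟨t, ht⟩ := exists_ne (1 : T)
  obtain ⟨b, hb⟩ : ∃ b, φ (Pi.mulSingle a t) b ≠ 1 := by
    by_contra! h
    exact ht (by simpa using φ.injective ((funext h).trans (map_one φ).symm))
  have hnormal : ((MonoidHom.mulSingle (fun _ => T) a).range.map φ.toMonoidHom).Normal :=
    (range_mulSingle_normal a).map φ.toMonoidHom φ.surjective
  refine ⟨b, (Subgroup.eq_of_le_of_card_ge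
    (range_mulSingle_le_of_normal hT hnormal ⟨_, ⟨t, rfl⟩, rfl⟩ hb) ?_).symm⟩
  rw [Subgroup.card_map_of_injective φ.injective, card_range_mulSingle, card_range_mulSingle]

theorem exists_mulAut_map_mulSingle (hT : ¬ ∀ a b : T, a * b = b * a)
    (φ : MulAut (ι → T)) (a : ι) :
    ∃ (b : ι) (ψ : MulAut T), ∀ t, φ (Pi.mulSingle a t) = Pi.mulSingle b (ψ t) := by
  obtain ⟨b, hb⟩ := exists_map_range_mulSingle_eq hT φ a
  let ψ : T →* T := (Pi.evalMonoidHom _ b).comp (φ.toMonoidHom.comp (MonoidHom.mulSingle _ a))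
  have hψ (t : T) : φ (Pi.mulSingle a t) = Pi.mulSingle b (ψ t) :=
    eq_mulSingle_of_mem_range_mulSingle (hb ▸ ⟨_, ⟨t, rfl⟩, rfl⟩)
  have hψinj : Function.Injective ψ := by
    refine (injective_iff_map_eq_one ψ).2 fun t ht => ?_
    have h1 := hψ t
    rw [ht, Pi.mulSingle_one, ← map_one φ] at h1
    simpa using φ.injective h1
  exact ⟨b, MulEquiv.ofBijective ψ (Finite.injective_iff_bijective.1 hψinj), hψ⟩

theorem card_mulAut_pi_le (hT : ¬ ∀ a b : T, a * b = b * a) :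
    Nat.card (MulAut (ι → T)) ≤ Nat.card ι ^ Nat.card ι * Nat.card (MulAut T) ^ Nat.card ι := by
  choose b ψ hψ using exists_mulAut_map_mulSingle (ι := ι) hT
  have hinj : Function.Injective fun φ a => (b φ a, ψ φ a) := by
    intro φ φ' h
    refine MulEquiv.toMonoidHom_injective (MonoidHom.pi_ext fun a t => ?_)
    simp only [funext_iff, Prod.ext_iff] at h
    simp only [MulEquiv.coe_toMonoidHom, hψ, (h a).1, (h a).2]
  calc Nat.card (MulAut (ι → T)) ≤ Nat.card (ι → ι × MulAut T) :=
        Nat.card_le_card_of_injective _ hinj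
    _ = _ := by rw [Nat.card_fun, Nat.card_prod, mul_pow]

end PiSimple

theorem sum_mul_logb_le_sum_mul_logb_sum {ι : Type*} {b : ℝ} (hb : 1 < b) (s : Finset ι)
    {x : ι → ℝ} (hx : ∀ i ∈ s, 0 ≤ x i) :
    ∑ i ∈ s, x i * Real.logb b (x i) ≤ (∑ i ∈ s, x i) * Real.logb b (∑ i ∈ s, x i) := by
  rw [Finset.sum_mul]
  refine Finset.sum_le_sum fun i hi => ?_
  rcases (hx i hi).eq_or_lt with h | h
  · simp [← h]
  · exact mul_le_mul_of_nonneg_left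
      (Real.logb_le_logb_of_le hb h (Finset.single_le_sum hx hi)) h.le

theorem logb_prod_pow_mul_pow_lt {ι : Type*} [Fintype ι] [Nonempty ι] {b : ℝ} (hb : 1 < b)
    {n A : ι → ℕ} (hn : ∀ i, 0 < n i) (hA : ∀ i, 0 < A i) {X : ι → ℝ}
    (hX : ∀ i, Real.logb b (A i) < X i) :
    Real.logb b (∏ i, ((n i : ℝ) ^ n i * (A i : ℝ) ^ n i)) <
      (∑ i, (n i : ℝ)) * Real.logb b (∑ i, (n i : ℝ)) + ∑ i, n i * X i := by
  have hn' (i : ι) : (0 : ℝ) < n i := Nat.cast_pos.2 (hn i)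
  have hA' (i : ι) : (0 : ℝ) < A i := Nat.cast_pos.2 (hA i)
  calc Real.logb b (∏ i, ((n i : ℝ) ^ n i * (A i : ℝ) ^ n i))
      = ∑ i, (n i * Real.logb b (n i) + n i * Real.logb b (A i)) := by
        rw [Real.logb_prod _ _ fun i _ => by have := hn' i; have := hA' i; positivity]
        refine Finset.sum_congr rfl fun i _ => ?_
        rw [Real.logb_mul (pow_pos (hn' i) _).ne' (pow_pos (hA' i) _).ne', Real.logb_pow,
          Real.logb_pow]
    _ = ∑ i, n i * Real.logb b (n i) + ∑ i, n i * Real.logb b (A i) := Finset.sum_add_distrib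
    _ < (∑ i, (n i : ℝ)) * Real.logb b (∑ i, (n i : ℝ)) + ∑ i, n i * X i :=
        add_lt_add_of_le_of_lt
          (sum_mul_logb_le_sum_mul_logb_sum hb _ fun i _ => (hn' i).le)
          (Finset.sum_lt_sum_of_nonempty Finset.univ_nonempty fun i _ =>
            mul_lt_mul_of_pos_left (hX i) (hn' i))

theorem logb_card_lt_of_trivial_radical_general
    (G : Type) [Group G] [Finite G] [Nontrivial G]
    (r : ℕ) (M : Fin r → Subgroup G)
    (hmin : ∀ i, IsMinimalNormal (M i))
    (hall : ∀ N : Subgroup G, IsMinimalNormal N → ∃ i, N = M i)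
    (n : Fin r → ℕ) (T : Fin r → Type) [∀ i, Group (T i)] [∀ i, Finite (T i)]
    (hsimple : ∀ i, IsSimpleGroup (T i))
    (hnonab : ∀ i, ¬ ∀ a b : T i, a * b = b * a)
    (hiso : ∀ i, Nonempty ((M i) ≃* (Fin (n i) → T i)))
    (c₂ : ℝ)
    (hc₂' : ∀ (S : Type) [Group S] [Finite S], IsSimpleGroup S →
      (¬ ∀ a b : S, a * b = b * a) →
      Real.logb 2 (Nat.card (MulAut S)) <
        c₂ * (Real.logb 2 (numAutOrbits S)) ^ 2 *
          Real.logb 2 (Real.logb 2 (numAutOrbits S))) :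
    Real.logb 2 (Nat.card G) <
      (∑ i, (n i : ℝ)) * Real.logb 2 (∑ i, (n i : ℝ)) +
        c₂ * ∑ i, (n i : ℝ) * (Real.logb 2 (numAutOrbits (T i))) ^ 2 *
          Real.logb 2 (Real.logb 2 (numAutOrbits (T i))) := by
  have hnormal (i : Fin r) : (M i).Normal := (hmin i).2.1
  have hn (i : Fin r) : 0 < n i := pos_of_mulEquiv_fin_pi (hmin i).1 (hiso i).some
  have : Nonempty (Fin r) :=
    let ⟨N, hN⟩ := exists_isMinimalNormal (G := G)
    ⟨(hall N hN).choose⟩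
  have hM (i : Fin r) : ¬ ∀ a b : M i, a * b = b * a := fun h =>
    hnonab i (mul_comm_of_mulEquiv_pi (hiso i).some h ⟨0, hn i⟩)
  have hcard : Nat.card G ≤ ∏ i, (n i ^ n i * Nat.card (MulAut (T i)) ^ n i) :=
    (card_le_prod_card_mulAut M (iInf_centralizer_eq_bot M hall hM)).trans
      (Finset.prod_le_prod' fun i _ => by
        rw [Nat.card_congr (MulAut.congr (hiso i).some).toEquiv]
        simpa using card_mulAut_pi_le (ι := Fin (n i)) (hnonab i))
  calc Real.logb 2 (Nat.card G)
      ≤ Real.logb 2 (∏ i, ((n i : ℝ) ^ n i * (Nat.card (MulAut (T i)) : ℝ) ^ n i)) :=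
        Real.logb_le_logb_of_le one_lt_two (Nat.cast_pos.2 Nat.card_pos) (by exact_mod_cast hcard)
    _ < _ := logb_prod_pow_mul_pow_lt one_lt_two hn (fun _ => Nat.card_pos)
        fun i => hc₂' (T i) (hsimple i) (hnonab i)
    _ = _ := by
        rw [Finset.mul_sum]
        congr 1
        exact Finset.sum_congr rfl fun i _ => by ring

/-- Let `G` be a nontrivial finite group with trivial solvable radical, with distinct
minimal normal subgroups `M₁, …, M_r`, where `M i ≅ (T i)^(n i)` for nonabelian finite
simple groups `T i`. Setting `n = ∑ n i` and `k i = k*(T i)`, if `c₂ > 0` satisfies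
`log₂|Aut T| < c₂ (log₂ k*(T))² log₂ log₂ k*(T)` for all nonabelian finite simple `T`, then
`log₂|G| < n log₂ n + c₂ ∑ i, n i (log₂ k i)² log₂ log₂ k i`. -/
theorem logb_card_lt_of_trivial_radical
    (G : Type) [Group G] [Finite G] [Nontrivial G]
    (hrad : ∀ N : Subgroup G, N.Normal → IsSolvable N → N = ⊥)
    (r : ℕ) (M : Fin r → Subgroup G)
    (hmin : ∀ i, IsMinimalNormal (M i))
    (hinj : Function.Injective M)
    (hall : ∀ N : Subgroup G, IsMinimalNormal N → ∃ i, N = M i)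
    (n : Fin r → ℕ) (T : Fin r → Type) [∀ i, Group (T i)] [∀ i, Finite (T i)]
    (hsimple : ∀ i, IsSimpleGroup (T i))
    (hnonab : ∀ i, ¬ ∀ a b : T i, a * b = b * a)
    (hiso : ∀ i, Nonempty ((M i) ≃* (Fin (n i) → T i)))
    (c₂ : ℝ) (hc₂ : 0 < c₂)
    (hc₂' : ∀ (S : Type) [Group S] [Finite S], IsSimpleGroup S →
      (¬ ∀ a b : S, a * b = b * a) →
      Real.logb 2 (Nat.card (MulAut S)) <
        c₂ * (Real.logb 2 (numAutOrbits S)) ^ 2 *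
          Real.logb 2 (Real.logb 2 (numAutOrbits S))) :
    Real.logb 2 (Nat.card G) <
      (∑ i, (n i : ℝ)) * Real.logb 2 (∑ i, (n i : ℝ)) +
        c₂ * ∑ i, (n i : ℝ) * (Real.logb 2 (numAutOrbits (T i))) ^ 2 *
          Real.logb 2 (Real.logb 2 (numAutOrbits (T i))) :=
  logb_card_lt_of_trivial_radical_general G r M hmin hall n T hsimple hnonab hiso c₂ hc₂'
end

section
/- Let G be a nontrivial finite group with trivial solvable radical, let M₁, …, M_r be the distinct minimal normal subgroups of G, suppose each M_i is isomorphic to a direct product of n_i copies of a nonabelian finite simple group T_i, and set k_i = k*(T_i). Then for every i with 1 ≤ i ≤ r, the number of conjugacy classes of G contained in M_i (equivalently, the number of orbits of the conjugation action of G on M_i) is at least (k_i / n_i)^{n_i}. -/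
set_option linter.unusedSectionVars false

section Factor
variable {ι : Type*} [DecidableEq ι] {T : Type*} [Group T]

/-- the `j`-th coordinate factor of a direct product of groups -/
def factorSubgroup (j : ι) : Subgroup (ι → T) where
  carrier := {x | ∀ k, k ≠ j → x k = 1}
  one_mem' := fun k _ => rfl
  mul_mem' := by
    intro a b ha hb k hk
    simp [Pi.mul_apply, ha k hk, hb k hk]
  inv_mem' := by
    intro a ha k hk
    simp [Pi.inv_apply, ha k hk]

lemma mem_factorSubgroup {x : ι → T} {j : ι} :
    x ∈ factorSubgroup j ↔ ∀ k, k ≠ j → x k = 1 := Iff.rfl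

lemma factorSubgroup_normal (j : ι) : (factorSubgroup (T := T) j).Normal := by
  constructor
  intro x hx g k hk
  simp [Pi.mul_apply, hx k hk]

lemma eq_mulSingle_of_mem {x : ι → T} {j : ι} (hx : x ∈ factorSubgroup j) :
    x = Pi.mulSingle j (x j) := by
  funext k
  rcases eq_or_ne k j with rfl | hk
  · simp
  · rw [hx k hk, Pi.mulSingle_eq_of_ne hk]

lemma mulSingle_mem_factorSubgroup (j : ι) (t : T) :
    Pi.mulSingle j t ∈ factorSubgroup j := by
  rw [mem_factorSubgroup]
  intro k hk
  rw [Pi.mulSingle_eq_of_ne hk]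

lemma factorSubgroup_ne_bot [Nontrivial T] (j : ι) : factorSubgroup (T := T) j ≠ ⊥ := by
  obtain ⟨t, ht⟩ := exists_ne (1 : T)
  intro h
  have := h ▸ mulSingle_mem_factorSubgroup j t
  rw [Subgroup.mem_bot] at this
  exact ht (by simpa using congrFun this j)

lemma factorSubgroup_injective [Nontrivial T] :
    Function.Injective (factorSubgroup (ι := ι) (T := T)) := by
  intro j j' h
  by_contra hne
  obtain ⟨t, ht⟩ := exists_ne (1 : T)
  have hmem := h ▸ mulSingle_mem_factorSubgroup (T := T) j t
  have := (mem_factorSubgroup.mp hmem) j (fun hj => hne hj)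
  rw [Pi.mulSingle_eq_same] at this
  exact ht this

/-- center is trivial for nonabelian simple groups -/
lemma center_eq_bot_of_nonabelian {T : Type*} [Group T] [IsSimpleGroup T]
    (hna : ¬ ∀ a b : T, a * b = b * a) : Subgroup.center T = ⊥ := by
  have hnorm : (Subgroup.center T).Normal := by
    constructor
    intro x hx g
    rw [Subgroup.mem_center_iff] at hx ⊢
    intro y
    have := hx (g⁻¹ * y * g)
    calc y * (g * x * g⁻¹) = g * ((g⁻¹ * y * g) * x) * g⁻¹ := by group
      _ = g * (x * (g⁻¹ * y * g)) * g⁻¹ := by rw [this]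
      _ = g * x * g⁻¹ * y := by group
  rcases hnorm.eq_bot_or_eq_top with h | h
  · exact h
  · refine absurd (fun a b => ?_) hna
    have : a ∈ Subgroup.center T := h ▸ Subgroup.mem_top a
    exact (Subgroup.mem_center_iff.mp this b).symm

/-- Lemma 1: each factor is a minimal normal subgroup -/
lemma eq_factor_of_le [IsSimpleGroup T] {K : Subgroup (ι → T)} {j : ι}
    (hK : K.Normal) (hle : K ≤ factorSubgroup j) (hbot : K ≠ ⊥) :
    K = factorSubgroup j := by
  set K' : Subgroup T := K.map (Pi.evalMonoidHom (fun _ => T) j) with hK'def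
  have hK'n : K'.Normal := by
    constructor
    rintro t' ⟨x, hx, rfl⟩ g
    refine ⟨Pi.mulSingle j g * x * (Pi.mulSingle j g)⁻¹, hK.conj_mem x hx _, ?_⟩
    simp [Pi.evalMonoidHom]
  have hK'bot : K' ≠ ⊥ := by
    obtain ⟨⟨x, hx⟩, hx1⟩ := Subgroup.ne_bot_iff_exists_ne_one.mp hbot
    intro h
    have hmem : x j ∈ K' := ⟨x, hx, rfl⟩
    rw [h, Subgroup.mem_bot] at hmem
    apply hx1
    ext1
    show x = 1
    rw [eq_mulSingle_of_mem (hle hx), hmem]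
    simp
  have hK'top : K' = ⊤ := hK'n.eq_bot_or_eq_top.resolve_left hK'bot
  refine le_antisymm hle ?_
  intro y hy
  have hmem : y j ∈ K' := hK'top ▸ Subgroup.mem_top (y j)
  obtain ⟨x, hx, hxj⟩ := hmem
  have hxf : x = Pi.mulSingle j (x j) := eq_mulSingle_of_mem (hle hx)
  have heq : y = x := by
    rw [eq_mulSingle_of_mem hy, ← hxj]
    exact hxf.symm
  exact heq ▸ hx

/-- Lemma 2: every nontrivial normal subgroup contains a factor -/
lemma exists_factor_le [IsSimpleGroup T] (hna : ¬ ∀ a b : T, a * b = b * a)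
    {N : Subgroup (ι → T)} (hN : N.Normal) (hbot : N ≠ ⊥) :
    ∃ j, factorSubgroup j ≤ N := by
  obtain ⟨⟨x, hx⟩, hx1⟩ := Subgroup.ne_bot_iff_exists_ne_one.mp hbot
  have hx1' : x ≠ 1 := fun h => hx1 (Subtype.ext h)
  obtain ⟨j, hj⟩ : ∃ j, x j ≠ 1 := by
    by_contra h
    push_neg at h
    exact hx1' (funext h)
  obtain ⟨t, ht⟩ : ∃ t : T, x j * t ≠ t * x j := by
    by_contra h
    push_neg at h
    have : x j ∈ Subgroup.center T := Subgroup.mem_center_iff.mpr fun g => (h g).symm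
    rw [center_eq_bot_of_nonabelian hna, Subgroup.mem_bot] at this
    exact hj this
  set s : ι → T := Pi.mulSingle j t with hs
  set z : ι → T := x * s * x⁻¹ * s⁻¹ with hz
  have hzN : z ∈ N := by
    have h1 : s * x⁻¹ * s⁻¹ ∈ N := hN.conj_mem _ (N.inv_mem hx) s
    have := N.mul_mem hx h1
    simpa [hz, mul_assoc] using this
  have hzf : z ∈ factorSubgroup j := by
    rw [mem_factorSubgroup]
    intro k hk
    have hsk : s k = 1 := by rw [hs, Pi.mulSingle_eq_of_ne hk]
    simp [hz, Pi.mul_apply, Pi.inv_apply, hsk]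
  have hz1 : z ≠ 1 := by
    intro h
    apply ht
    have h2 := congrFun h j
    have hsj : s j = t := by rw [hs, Pi.mulSingle_eq_same]
    simp only [hz, Pi.mul_apply, Pi.inv_apply, hsj, Pi.one_apply] at h2
    have : x j * t = t * x j := by
      have := mul_eq_one_iff_eq_inv.mp h2
      calc x j * t = (x j * t * (x j)⁻¹ * t⁻¹) * (t * x j) := by group
        _ = t * x j := by rw [h2]; group
    exact this
  refine ⟨j, ?_⟩
  have hinf : N ⊓ factorSubgroup j = factorSubgroup j := by
    refine eq_factor_of_le ?_ inf_le_right ?_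
    · have := factorSubgroup_normal (T := T) j
      exact Subgroup.normal_inf_normal N (factorSubgroup j)
    · refine Subgroup.ne_bot_iff_exists_ne_one.mpr ⟨⟨z, hzN, hzf⟩, ?_⟩
      intro h
      exact hz1 (by simpa using congrArg Subtype.val h)
  exact hinf ▸ inf_le_left

end Factor
section Aut
variable {ι : Type*} [DecidableEq ι] [Finite ι] {T : Type*} [Group T] [IsSimpleGroup T]

lemma comp_symm_eq_id (φ : MulAut (ι → T)) :
    φ.symm.toMonoidHom.comp φ.toMonoidHom = MonoidHom.id _ := by
  ext x
  simp

lemma comp_symm_eq_id' (φ : MulAut (ι → T)) :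
    φ.toMonoidHom.comp φ.symm.toMonoidHom = MonoidHom.id _ := by
  ext x
  simp

lemma map_factor (hna : ¬ ∀ a b : T, a * b = b * a) (φ : MulAut (ι → T)) (j : ι) :
    ∃ k, (factorSubgroup j).map φ.toMonoidHom = factorSubgroup k := by
  have hnorm : ((factorSubgroup (T := T) j).map φ.toMonoidHom).Normal :=
    (factorSubgroup_normal j).map φ.toMonoidHom φ.surjective
  have hbot : (factorSubgroup (T := T) j).map φ.toMonoidHom ≠ ⊥ := by
    have hinj : Function.Injective ⇑φ.toMonoidHom := φ.injective
    exact fun h => factorSubgroup_ne_bot j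
      ((Subgroup.map_eq_bot_iff_of_injective _ hinj).mp h)
  obtain ⟨k, hk⟩ := exists_factor_le hna hnorm hbot
  refine ⟨k, ?_⟩
  have h2 : (factorSubgroup (T := T) k).map φ.symm.toMonoidHom ≤ factorSubgroup j := by
    calc (factorSubgroup (T := T) k).map φ.symm.toMonoidHom
        ≤ ((factorSubgroup j).map φ.toMonoidHom).map φ.symm.toMonoidHom :=
          Subgroup.map_mono hk
      _ = factorSubgroup j := by
          rw [Subgroup.map_map, comp_symm_eq_id, Subgroup.map_id]
  have h3 : (factorSubgroup (T := T) k).map φ.symm.toMonoidHom = factorSubgroup j := by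
    refine eq_factor_of_le ?_ h2 ?_
    · exact (factorSubgroup_normal k).map φ.symm.toMonoidHom φ.symm.surjective
    · have hinj : Function.Injective ⇑φ.symm.toMonoidHom := φ.symm.injective
      exact fun h => factorSubgroup_ne_bot k
        ((Subgroup.map_eq_bot_iff_of_injective _ hinj).mp h)
  rw [← h3, Subgroup.map_map, comp_symm_eq_id', Subgroup.map_id]

lemma exists_perm (hna : ¬ ∀ a b : T, a * b = b * a) (φ : MulAut (ι → T)) :
    ∃ τ : Equiv.Perm ι, ∀ j, (factorSubgroup j).map φ.toMonoidHom = factorSubgroup (τ j) := by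
  choose f hf using map_factor hna φ
  have hinj : Function.Injective f := by
    intro a b hab
    apply factorSubgroup_injective (ι := ι) (T := T)
    have h1 := hf a
    rw [hab, ← hf b] at h1
    exact Subgroup.map_injective φ.injective h1
  exact ⟨Equiv.ofBijective f (Finite.injective_iff_bijective.mp hinj), hf⟩

variable {φ : MulAut (ι → T)} {τ : Equiv.Perm ι}

lemma phi_mulSingle
    (hτ : ∀ j, (factorSubgroup j).map φ.toMonoidHom = factorSubgroup (τ j)) (j : ι) (t : T) :
    φ (Pi.mulSingle j t) = Pi.mulSingle (τ j) (φ (Pi.mulSingle j t) (τ j)) := by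
  have hmem : φ (Pi.mulSingle j t) ∈ factorSubgroup (τ j) := by
    rw [← hτ j]
    exact ⟨Pi.mulSingle j t, mulSingle_mem_factorSubgroup j t, rfl⟩
  exact eq_mulSingle_of_mem hmem

/-- evaluation at a coordinate not moved : `x j = 1` implies `φ x (τ j) = 1`. -/
lemma phi_apply_eq_one (hna : ¬ ∀ a b : T, a * b = b * a)
    (hτ : ∀ j, (factorSubgroup j).map φ.toMonoidHom = factorSubgroup (τ j))
    {x : ι → T} {j : ι} (hxj : x j = 1) : φ x (τ j) = 1 := by
  have hcen : ∀ t : T, t * φ x (τ j) = φ x (τ j) * t := by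
    intro t
    have hmem : Pi.mulSingle (τ j) t ∈ (factorSubgroup (T := T) j).map φ.toMonoidHom := by
      rw [hτ j]; exact mulSingle_mem_factorSubgroup (τ j) t
    obtain ⟨w, hw, hweq⟩ := hmem
    have hweq' : φ w = Pi.mulSingle (τ j) t := hweq
    have hcomm : w * x = x * w := by
      funext k
      rcases eq_or_ne k j with rfl | hk
      · simp [Pi.mul_apply, hxj]
      · rw [Pi.mul_apply, Pi.mul_apply, (mem_factorSubgroup.mp hw) k hk, one_mul, mul_one]
    have h2 : φ w * φ x = φ x * φ w := by
      rw [← map_mul, ← map_mul, hcomm]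
    rw [hweq'] at h2
    have := congrFun h2 (τ j)
    simpa [Pi.mul_apply] using this
  have : φ x (τ j) ∈ Subgroup.center T := Subgroup.mem_center_iff.mpr hcen
  rw [center_eq_bot_of_nonabelian hna, Subgroup.mem_bot] at this
  exact this

lemma phi_eval (hna : ¬ ∀ a b : T, a * b = b * a)
    (hτ : ∀ j, (factorSubgroup j).map φ.toMonoidHom = factorSubgroup (τ j))
    (x : ι → T) (j : ι) :
    φ x (τ j) = φ (Pi.mulSingle j (x j)) (τ j) := by
  set y : ι → T := (Pi.mulSingle j (x j))⁻¹ * x with hy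
  have hyj : y j = 1 := by
    rw [hy, Pi.mul_apply, Pi.inv_apply, Pi.mulSingle_eq_same, inv_mul_cancel]
  have hx : φ x = φ (Pi.mulSingle j (x j)) * φ y := by
    rw [← map_mul]
    congr 1
    rw [hy]
    group
  rw [hx, Pi.mul_apply, phi_apply_eq_one hna hτ hyj, mul_one]

/-- the coordinate automorphism of `T` induced by `φ` at coordinate `j`. -/
noncomputable def coordAut (hna : ¬ ∀ a b : T, a * b = b * a)
    (hτ : ∀ j, (factorSubgroup j).map φ.toMonoidHom = factorSubgroup (τ j)) (j : ι) :
    MulAut T := by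
  refine MulEquiv.ofBijective
    ((Pi.evalMonoidHom (fun _ => T) (τ j)).comp
      (φ.toMonoidHom.comp (MonoidHom.mulSingle (fun _ => T) j))) ⟨?_, ?_⟩
  · rw [injective_iff_map_eq_one]
    intro t ht
    simp only [MonoidHom.comp_apply, MonoidHom.mulSingle_apply, Pi.evalMonoidHom_apply] at ht
    have ht' : φ (Pi.mulSingle j t) (τ j) = 1 := ht
    have h1 := phi_mulSingle hτ j t
    rw [ht'] at h1
    have h2 : Pi.mulSingle j t = (1 : ι → T) := by
      apply φ.injective
      rw [h1]
      simp
    have := congrFun h2 j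
    rwa [Pi.mulSingle_eq_same] at this
  · intro s
    have hmem : φ.symm (Pi.mulSingle (τ j) s) ∈ factorSubgroup j := by
      have : (factorSubgroup (T := T) (τ j)).map φ.symm.toMonoidHom = factorSubgroup j := by
        rw [← hτ j, Subgroup.map_map, comp_symm_eq_id, Subgroup.map_id]
      rw [← this]
      exact ⟨_, mulSingle_mem_factorSubgroup (τ j) s, rfl⟩
    refine ⟨φ.symm (Pi.mulSingle (τ j) s) j, ?_⟩
    simp only [MonoidHom.comp_apply, MonoidHom.mulSingle_apply, Pi.evalMonoidHom_apply]
    rw [← eq_mulSingle_of_mem hmem]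
    simp

lemma coordAut_spec (hna : ¬ ∀ a b : T, a * b = b * a)
    (hτ : ∀ j, (factorSubgroup j).map φ.toMonoidHom = factorSubgroup (τ j)) (j : ι) (x : ι → T) :
    φ x (τ j) = coordAut hna hτ j (x j) := by
  rw [phi_eval hna hτ x j]
  rfl

end Aut

section Count
variable {ι : Type*} [DecidableEq ι] [Fintype ι] {T : Type*} [Group T] [IsSimpleGroup T]

/-- the orbit class of an element under the automorphism group -/
noncomputable def clOrbit (t : T) : Quotient (MulAction.orbitRel (MulAut T) T) :=
  Quotient.mk (MulAction.orbitRel (MulAut T) T) t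

/-- the multiset of orbit classes of coordinates -/
noncomputable def msOf (x : ι → T) : Multiset (Quotient (MulAction.orbitRel (MulAut T) T)) :=
  Finset.univ.val.map fun j => clOrbit (x j)

lemma msOf_aut (hna : ¬ ∀ a b : T, a * b = b * a) (φ : MulAut (ι → T)) (x : ι → T) :
    msOf (φ x) = msOf x := by
  obtain ⟨τ, hτ⟩ := exists_perm hna φ
  calc msOf (φ x) = Multiset.map (fun j => clOrbit (φ x j)) Finset.univ.val := rfl
    _ = Multiset.map (fun j => clOrbit (φ x j)) (Multiset.map τ Finset.univ.val) := by
        rw [Multiset.map_univ_val_equiv]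
    _ = Multiset.map (fun j => clOrbit (φ x (τ j))) Finset.univ.val := by
        rw [Multiset.map_map]; rfl
    _ = Multiset.map (fun j => clOrbit (x j)) Finset.univ.val := by
        refine Multiset.map_congr rfl ?_
        intro j _
        rw [coordAut_spec hna hτ j x]
        exact Quotient.sound ⟨coordAut hna hτ j, rfl⟩
    _ = msOf x := rfl

lemma exists_msOf {n : ℕ} (m : Multiset (Quotient (MulAction.orbitRel (MulAut T) T)))
    (hm : Multiset.card m = n) : ∃ x : Fin n → T, msOf x = m := by
  set l := m.toList with hldef
  have hlen : l.length = n := by rw [hldef, Multiset.length_toList, hm]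
  refine ⟨fun j => (l.get (Fin.cast hlen.symm j)).out, ?_⟩
  have h1 : msOf (fun j => (l.get (Fin.cast hlen.symm j)).out)
      = Finset.univ.val.map (fun j : Fin n => l.get (Fin.cast hlen.symm j)) := by
    refine Multiset.map_congr rfl ?_
    intro j _
    exact Quotient.out_eq _
  have h2 : List.ofFn (fun j : Fin n => l.get (Fin.cast hlen.symm j)) = l := by
    apply List.ext_getElem
    · rw [List.length_ofFn, hlen]
    intro a ha hb
    simp [List.getElem_ofFn]
  rw [h1, Fin.univ_val_map, h2, hldef, Multiset.coe_toList]

end Count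

lemma arith_nat (k n : ℕ) : k ^ n * n.factorial ≤ n ^ n * (k + n - 1).descFactorial n := by
  have h1 : k ^ n * n.factorial = ∏ i ∈ Finset.range n, (k * (i + 1)) := by
    rw [Finset.prod_mul_distrib, Finset.prod_const, Finset.card_range,
      Finset.prod_range_add_one_eq_factorial]
  have h2 : n ^ n * (k + n - 1).descFactorial n = ∏ i ∈ Finset.range n, (n * (k + n - 1 - i)) := by
    rw [Finset.prod_mul_distrib, Finset.prod_const, Finset.card_range,
      Nat.descFactorial_eq_prod_range]
  rw [h1, h2]
  refine Finset.prod_le_prod (by intros; positivity) ?_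
  intro i hi
  rw [Finset.mem_range] at hi
  obtain ⟨j, hj⟩ : ∃ j, n - 1 - i = j := ⟨_, rfl⟩
  have hn : n = i + j + 1 := by omega
  have hkj : k + n - 1 - i = k + j := by omega
  rw [hkj, hn]
  nlinarith

lemma arith_real (k n : ℕ) : ((k : ℝ) / n) ^ n ≤ ((k + n - 1).choose n : ℝ) := by
  rcases Nat.eq_zero_or_pos n with h | _
  · simp [h]
  have hnat : k ^ n ≤ (k + n - 1).choose n * n ^ n := by
    have h0 := arith_nat k n
    rw [Nat.descFactorial_eq_factorial_mul_choose] at h0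
    have h2 : k ^ n * n.factorial ≤ (k + n - 1).choose n * n ^ n * n.factorial := by
      calc k ^ n * n.factorial ≤ n ^ n * (n.factorial * (k + n - 1).choose n) := h0
        _ = (k + n - 1).choose n * n ^ n * n.factorial := by ring
    exact Nat.le_of_mul_le_mul_right h2 n.factorial_pos
  have hn0 : (0 : ℝ) < (n : ℝ) ^ n := by positivity
  rw [div_pow, div_le_iff₀ hn0]
  exact_mod_cast hnat

/-- Let `G` be a nontrivial finite group with trivial solvable radical, with distinct
minimal normal subgroups `M₁, …, M_r`, where `M i ≅ (T i)^(n i)` for nonabelian finite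
simple groups `T i`, and let `k i = k*(T i)`. Then for every `i` the number of conjugacy
classes of `G` lying inside `M i` is at least `(k i / n i)^(n i)`. -/
theorem conjClasses_in_minimal_normal_lower_bound
    (G : Type) [Group G] [Finite G] [Nontrivial G]
    (hrad : ∀ N : Subgroup G, N.Normal → IsSolvable N → N = ⊥)
    (r : ℕ) (M : Fin r → Subgroup G)
    (hmin : ∀ i, IsMinimalNormal (M i))
    (hinj : Function.Injective M)
    (hall : ∀ N : Subgroup G, IsMinimalNormal N → ∃ i, N = M i)
    (n : Fin r → ℕ) (T : Fin r → Type) [∀ i, Group (T i)] [∀ i, Finite (T i)]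
    (hsimple : ∀ i, IsSimpleGroup (T i))
    (hnonab : ∀ i, ¬ ∀ a b : T i, a * b = b * a)
    (hiso : ∀ i, Nonempty ((M i) ≃* (Fin (n i) → T i))) :
    ∀ i : Fin r,
      ((numAutOrbits (T i) : ℝ) / (n i : ℝ)) ^ (n i : ℕ) ≤
        (Nat.card {c : ConjClasses G // (c.carrier : Set G) ⊆ (M i : Set G)} : ℝ) := by
  intro i
  classical
  obtain ⟨e⟩ := hiso i
  haveI := hsimple i
  have hna := hnonab i
  have hMbot : M i ≠ ⊥ := (hmin i).1
  haveI hnorm : (M i).Normal := (hmin i).2.1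
  set Q := Quotient (MulAction.orbitRel (MulAut (T i)) (T i)) with hQdef
  -- realization function
  have hreal : ∀ m : Sym Q (n i), ∃ x : Fin (n i) → T i, msOf x = m.1 :=
    fun m => exists_msOf m.1 m.2
  choose real hrealspec using hreal
  -- the injection from multisets to conjugacy classes inside `M i`
  have hsub : ∀ m : Sym Q (n i),
      ((ConjClasses.mk ((e.symm (real m) : M i) : G)).carrier : Set G) ⊆ (M i : Set G) := by
    intro m b hb
    rw [ConjClasses.mem_carrier_iff_mk_eq] at hb
    have hconj : IsConj ((e.symm (real m) : M i) : G) b :=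
      (ConjClasses.mk_eq_mk_iff_isConj.mp hb).symm
    obtain ⟨c, hc⟩ := isConj_iff.mp hconj
    rw [← hc]
    exact hnorm.conj_mem _ (e.symm (real m)).2 c
  set Φ : Sym Q (n i) → {c : ConjClasses G // (c.carrier : Set G) ⊆ (M i : Set G)} :=
    fun m => ⟨ConjClasses.mk ((e.symm (real m) : M i) : G), hsub m⟩ with hΦdef
  have hinjΦ : Function.Injective Φ := by
    intro m m' h
    have hmk : ConjClasses.mk ((e.symm (real m) : M i) : G)
        = ConjClasses.mk ((e.symm (real m') : M i) : G) := congrArg Subtype.val h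
    obtain ⟨g, hg⟩ := isConj_iff.mp (ConjClasses.mk_eq_mk_iff_isConj.mp hmk)
    set φg : MulAut (Fin (n i) → T i) := (e.symm.trans (MulAut.conjNormal g)).trans e with hφg
    have hgm : φg (real m) = real m' := by
      have h1 : ((MulAut.conjNormal g (e.symm (real m)) : M i) : G)
          = ((e.symm (real m') : M i) : G) := by
        rw [MulAut.conjNormal_apply, hg]
      have h2 : MulAut.conjNormal g (e.symm (real m)) = e.symm (real m') :=
        Subtype.ext h1
      show e (MulAut.conjNormal g (e.symm (real m))) = real m'
      rw [h2]
      simp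
    apply Subtype.ext
    calc m.1 = msOf (real m) := (hrealspec m).symm
      _ = msOf (φg (real m)) := (msOf_aut hna φg (real m)).symm
      _ = msOf (real m') := by rw [hgm]
      _ = m'.1 := hrealspec m'
  have hcard1 : Nat.card (Sym Q (n i)) ≤
      Nat.card {c : ConjClasses G // (c.carrier : Set G) ⊆ (M i : Set G)} :=
    Nat.card_le_card_of_injective Φ hinjΦ
  haveI : Fintype Q := Fintype.ofFinite Q
  have hQcard : Nat.card (Sym Q (n i)) = (Nat.card Q + n i - 1).choose (n i) := by
    rw [Nat.card_eq_fintype_card, Sym.card_sym_eq_choose, Nat.card_eq_fintype_card]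
  have hk : numAutOrbits (T i) = Nat.card Q := rfl
  calc ((numAutOrbits (T i) : ℝ) / (n i : ℝ)) ^ (n i : ℕ)
      ≤ ((Nat.card Q + n i - 1).choose (n i) : ℝ) := by rw [hk]; exact arith_real _ _
    _ ≤ (Nat.card {c : ConjClasses G // (c.carrier : Set G) ⊆ (M i : Set G)} : ℝ) := by
        rw [← hQcard]
        exact_mod_cast hcard1
end

section
/- Let G be a nontrivial finite group with trivial solvable radical, let M₁, …, M_r be the distinct minimal normal subgroups of G, suppose each M_i is isomorphic to a direct product of n_i copies of a nonabelian finite simple group T_i, and set k_i = k*(T_i). Then ∏_{i=1}^{r} C(n_i + k_i − 1, k_i − 1) ≤ k(G), where C(a, b) denotes the binomial coefficient a choose b. -/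
/-- The number of conjugacy classes of a group `G`. -/
noncomputable def numConjClasses (G : Type*) [Group G] : ℕ :=
  Nat.card (ConjClasses G)

/-!
Distinct minimal normal subgroups of `G` meet trivially, hence commute elementwise; so
`M i ⊓ ⨆_{j ≠ i} M j` is abelian and normal, and the trivial solvable radical makes the product
of the `M i` direct. For `T` nonabelian simple, an automorphism of `T ^ n` permutes the `n`
coordinate copies of `T`, so the multiset of `Aut(T)`-orbits of the coordinates of `x ∈ T ^ n`
(its profile) is an automorphism invariant; in particular it is invariant under conjugation
by `G` on `M i ≅ T i ^ n i`. Realizing every family of profiles (there are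
`C(n i + k i - 1, k i - 1)` multisets of size `n i` on `k i` orbits) by an element of the direct
product `∏ M i ≤ G` gives pairwise non-conjugate elements of `G`.
-/

open Subgroup

section PiPower

variable {T : Type*} [Group T] {ι : Type*}

variable (T) in
abbrev AutOrbits : Type _ := Quotient (MulAction.orbitRel (MulAut T) T)

def autOrbit (t : T) : AutOrbits T := Quotient.mk _ t

instance : Nonempty (AutOrbits T) := ⟨autOrbit 1⟩

lemma autOrbit_mulAut_apply (α : MulAut T) (t : T) : autOrbit (α t) = autOrbit t :=
  Quotient.sound ⟨α, rfl⟩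

lemma center_eq_bot_of_not_comm [IsSimpleGroup T] (h : ¬ ∀ a b : T, a * b = b * a) :
    center T = ⊥ :=
  (instNormalCenter (G := T)).eq_bot_or_eq_top.resolve_right fun htop =>
    h fun a b => (((eq_top_iff' _).mp htop b).comm a).symm.eq

variable (T) in
def coordSubgroup (j : ι) : Subgroup (ι → T) where
  carrier := {y | ∀ k ≠ j, y k = 1}
  one_mem' _ _ := rfl
  mul_mem' ha hb k hk := by simp [ha k hk, hb k hk]
  inv_mem' ha k hk := by simp [ha k hk]

instance coordSubgroup_normal (j : ι) : (coordSubgroup T j).Normal :=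
  ⟨fun y hy g k hk => by simp [hy k hk]⟩

lemma mulSingle_mem_coordSubgroup [DecidableEq ι] (j : ι) (t : T) :
    Pi.mulSingle j t ∈ coordSubgroup T j :=
  fun _ hk => Pi.mulSingle_eq_of_ne (M := fun _ => T) hk t

lemma mulSingle_apply_eq_of_mem_coordSubgroup [DecidableEq ι] {j : ι} {y : ι → T}
    (hy : y ∈ coordSubgroup T j) : Pi.mulSingle j (y j) = y := by
  funext k
  rcases eq_or_ne k j with rfl | hk
  · simp
  · rw [Pi.mulSingle_eq_of_ne hk, hy k hk]

lemma card_coordSubgroup [DecidableEq ι] (j : ι) : Nat.card (coordSubgroup T j) = Nat.card T :=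
  Nat.card_congr
    { toFun := fun y => y.1 j
      invFun := fun t => ⟨Pi.mulSingle j t, mulSingle_mem_coordSubgroup j t⟩
      left_inv := fun y => Subtype.ext (mulSingle_apply_eq_of_mem_coordSubgroup y.2)
      right_inv := fun t => by simp }

lemma coordSubgroup_ne_bot [DecidableEq ι] [Nontrivial T] (j : ι) :
    coordSubgroup T j ≠ ⊥ := by
  obtain ⟨t, ht⟩ := exists_ne (1 : T)
  refine ne_bot_iff_exists_ne_one.mpr ⟨⟨_, mulSingle_mem_coordSubgroup j t⟩, ?_⟩
  simpa [Subtype.ext_iff] using ht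

lemma coordSubgroup_injective [Nontrivial T] :
    Function.Injective (coordSubgroup T : ι → Subgroup (ι → T)) := by
  classical
  intro j j' h
  by_contra hne
  obtain ⟨t, ht⟩ := exists_ne (1 : T)
  have hmem : Pi.mulSingle j t ∈ coordSubgroup T j' := h ▸ mulSingle_mem_coordSubgroup j t
  exact ht (by simpa using hmem j hne)

lemma mem_centralizer_coordSubgroup_iff [DecidableEq ι] (hT : center T = ⊥) {j : ι}
    {y : ι → T} : y ∈ centralizer (coordSubgroup T j : Set (ι → T)) ↔ y j = 1 := by
  constructor
  · intro hy
    have hcentral : y j ∈ center T := mem_center_iff.mpr fun t => by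
      simpa using congrFun (mem_centralizer_iff.mp hy _ (mulSingle_mem_coordSubgroup j t)) j
    rwa [hT, mem_bot] at hcentral
  · intro hyj
    refine mem_centralizer_iff.mpr fun c hc => funext fun k => ?_
    rcases eq_or_ne k j with rfl | hk
    · simp [hyj]
    · simp [hc k hk]

lemma mulSingle_commutator [DecidableEq ι] (j : ι) (t : T) (x : ι → T) :
    Pi.mulSingle j (t * x j * t⁻¹ * (x j)⁻¹) =
      Pi.mulSingle j t * x * (Pi.mulSingle j t)⁻¹ * x⁻¹ := by
  funext k
  rcases eq_or_ne k j with rfl | hk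
  · simp
  · simp [Pi.mulSingle_eq_of_ne hk]

lemma exists_coordSubgroup_le [IsSimpleGroup T] (hT : center T = ⊥) {N : Subgroup (ι → T)}
    [hN : N.Normal] (hN_ne : N ≠ ⊥) : ∃ j, coordSubgroup T j ≤ N := by
  classical
  obtain ⟨x, hxN, hx1⟩ := N.bot_or_exists_ne_one.resolve_left hN_ne
  obtain ⟨j, hxj⟩ : ∃ j, x j ≠ 1 := by
    by_contra! h
    exact hx1 (funext h)
  set D := N.comap (MonoidHom.mulSingle (fun _ => T) j)
  -- `D` contains every commutator `[t, x j]`, so `D = ⊥` would make `x j` central.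
  have hD : D = ⊤ := by
    refine (hN.comap _).eq_bot_or_eq_top.resolve_left fun (hD_bot : D = ⊥) => hxj ?_
    rw [← mem_bot, ← hT, mem_center_iff]
    intro t
    have hcomm : t * x j * t⁻¹ * (x j)⁻¹ ∈ D := by
      change Pi.mulSingle j _ ∈ N
      rw [mulSingle_commutator]
      exact N.mul_mem (hN.conj_mem _ hxN _) (N.inv_mem hxN)
    rw [hD_bot, mem_bot, mul_inv_eq_one, mul_inv_eq_iff_eq_mul] at hcomm
    exact hcomm
  refine ⟨j, fun y hy => ?_⟩
  rw [← mulSingle_apply_eq_of_mem_coordSubgroup hy]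
  exact (hD ▸ mem_top (y j) : y j ∈ D)

lemma exists_map_coordSubgroup_eq [DecidableEq ι] [Finite T] [IsSimpleGroup T]
    (hT : center T = ⊥) (f : (ι → T) ≃* (ι → T)) (j : ι) :
    ∃ k, (coordSubgroup T j).map f.toMonoidHom = coordSubgroup T k := by
  have hne : (coordSubgroup T j).map f.toMonoidHom ≠ ⊥ :=
    (map_eq_bot_iff_of_injective _ f.injective).not.mpr (coordSubgroup_ne_bot j)
  have : ((coordSubgroup T j).map f.toMonoidHom).Normal :=
    (coordSubgroup_normal j).map _ f.surjective
  obtain ⟨k, hk⟩ := exists_coordSubgroup_le hT hne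
  have : Finite (coordSubgroup T j) :=
    Nat.finite_of_card_ne_zero (by rw [card_coordSubgroup]; exact Nat.card_pos.ne')
  have : Finite ((coordSubgroup T j).map f.toMonoidHom) :=
    .of_equiv _ ((coordSubgroup T j).equivMapOfInjective _ f.injective).toEquiv
  refine ⟨k, (eq_of_le_of_card_ge hk ?_).symm⟩
  rw [card_map_of_injective f.injective, card_coordSubgroup, card_coordSubgroup]

lemma apply_eq_apply_mulSingle_of_map_eq [DecidableEq ι] (hT : center T = ⊥)
    (f : (ι → T) ≃* (ι → T)) {j k : ι}
    (h : (coordSubgroup T j).map f.toMonoidHom = coordSubgroup T k) (x : ι → T) :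
    f x k = f (Pi.mulSingle j (x j)) k := by
  set y := (Pi.mulSingle j (x j))⁻¹ * x
  have hy : y ∈ centralizer (coordSubgroup T j : Set (ι → T)) :=
    (mem_centralizer_coordSubgroup_iff hT).mpr (by simp [y])
  have hfy : f y ∈ centralizer (coordSubgroup T k : Set (ι → T)) := by
    rw [← h, coe_map]
    exact map_centralizer_le_centralizer_image _ f.toMonoidHom ⟨y, hy, rfl⟩
  have hfx : f x = f (Pi.mulSingle j (x j)) * f y := by rw [← map_mul, mul_inv_cancel_left]
  rw [hfx, Pi.mul_apply, (mem_centralizer_coordSubgroup_iff hT).mp hfy, mul_one]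

lemma autOrbit_apply_of_map_eq [DecidableEq ι] [Finite T] (hT : center T = ⊥)
    (f : (ι → T) ≃* (ι → T)) {j k : ι}
    (h : (coordSubgroup T j).map f.toMonoidHom = coordSubgroup T k) (x : ι → T) :
    autOrbit (f x k) = autOrbit (x j) := by
  let α : T →* T := (Pi.evalMonoidHom (fun _ => T) k).comp
    (f.toMonoidHom.comp (MonoidHom.mulSingle (fun _ => T) j))
  have hα : Function.Injective α := by
    intro a b hab
    have hmem : ∀ t, f (Pi.mulSingle j t) ∈ coordSubgroup T k := fun t =>
      h ▸ mem_map_of_mem f.toMonoidHom (mulSingle_mem_coordSubgroup j t)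
    have hf : f (Pi.mulSingle j a) = f (Pi.mulSingle j b) := by
      rw [← mulSingle_apply_eq_of_mem_coordSubgroup (hmem a),
        ← mulSingle_apply_eq_of_mem_coordSubgroup (hmem b)]
      exact congrArg _ hab
    simpa using congrFun (f.injective hf) j
  rw [apply_eq_apply_mulSingle_of_map_eq hT f h x]
  exact autOrbit_mulAut_apply (MulEquiv.ofBijective α (Finite.injective_iff_bijective.mp hα)) _

/-- An automorphism of `T ^ ι` permutes the coordinates up to automorphisms of `T`. -/
lemma exists_perm_autOrbit_apply_eq [Finite ι] [Finite T] [IsSimpleGroup T]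
    (hT : center T = ⊥) (f : (ι → T) ≃* (ι → T)) :
    ∃ σ : Equiv.Perm ι, ∀ x j, autOrbit (f x (σ j)) = autOrbit (x j) := by
  classical
  choose σ hσ using exists_map_coordSubgroup_eq hT f
  have hσ_inj : Function.Injective σ := fun j j' hjj' =>
    coordSubgroup_injective <| map_injective f.injective <| by rw [hσ, hσ, hjj']
  exact ⟨Equiv.ofBijective σ (Finite.injective_iff_bijective.mp hσ_inj),
    fun x j => autOrbit_apply_of_map_eq hT f (hσ j) x⟩

def autProfile [Fintype ι] (x : ι → T) : Multiset (AutOrbits T) :=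
  Finset.univ.val.map fun j => autOrbit (x j)

lemma autProfile_mulEquiv_apply [Fintype ι] [Finite T] [IsSimpleGroup T] (hT : center T = ⊥)
    (f : (ι → T) ≃* (ι → T)) (x : ι → T) : autProfile (f x) = autProfile x := by
  obtain ⟨σ, hσ⟩ := exists_perm_autOrbit_apply_eq hT f
  rw [autProfile, ← Multiset.map_univ_val_equiv σ, Multiset.map_map]
  exact Multiset.map_congr rfl fun j _ => hσ x j

lemma exists_autProfile_eq {n : ℕ} (m : Multiset (AutOrbits T)) (hm : Multiset.card m = n) :
    ∃ x : Fin n → T, autProfile x = m := by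
  obtain rfl : m.toList.length = n := by rw [Multiset.length_toList, hm]
  refine ⟨fun j => (m.toList.get j).out, ?_⟩
  have hout : ∀ q : AutOrbits T, autOrbit q.out = q := Quotient.out_eq
  rw [autProfile, Multiset.map_congr rfl fun j _ => hout _, Fin.univ_val_map, List.ofFn_get,
    Multiset.coe_toList]

end PiPower

lemma natCard_sym_eq_choose_pred {α : Type*} [Finite α] [Nonempty α] (k : ℕ) :
    Nat.card (Sym α k) = (k + Nat.card α - 1).choose (Nat.card α - 1) := by
  have hα : 0 < Nat.card α := Nat.card_pos
  rw [Sym.natCard_sym_eq_choose, show Nat.card α + k - 1 = k + Nat.card α - 1 by omega]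
  exact Nat.choose_symm_of_eq_add (by omega)

section MinimalNormal

variable {G : Type*} [Group G]

lemma IsMinimalNormal.normal {N : Subgroup G} (hN : IsMinimalNormal N) : N.Normal := hN.2.1

lemma IsMinimalNormal.disjoint {N K : Subgroup G} (hN : IsMinimalNormal N)
    (hK : IsMinimalNormal K) (hNK : N ≠ K) : Disjoint N K := by
  have := hN.normal
  have := hK.normal
  rw [disjoint_iff]
  by_contra hne
  exact hNK ((hN.2.2 _ inferInstance inf_le_left hne).symm.trans
    (hK.2.2 _ inferInstance inf_le_right hne))

variable {ι : Type*} {M : ι → Subgroup G}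

lemma pairwise_commute_of_isMinimalNormal (hmin : ∀ i, IsMinimalNormal (M i))
    (hinj : Function.Injective M) :
    Pairwise fun i j => ∀ x y : G, x ∈ M i → y ∈ M j → Commute x y := fun i j hij =>
  commute_of_normal_of_disjoint _ _ (hmin i).normal (hmin j).normal
    ((hmin i).disjoint (hmin j) (hinj.ne hij))

/-- `M i ⊓ ⨆_{j ≠ i} M j` is normal and abelian, as `M i` centralizes the other `M j`. -/
lemma iSupIndep_of_isMinimalNormal
    (hrad : ∀ N : Subgroup G, N.Normal → Group.IsSolvable N → N = ⊥)
    (hmin : ∀ i, IsMinimalNormal (M i)) (hinj : Function.Injective M) : iSupIndep M := by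
  have := fun i => (hmin i).normal
  have hcomm := pairwise_commute_of_isMinimalNormal hmin hinj
  intro i
  have hcent : (⨆ j, ⨆ _ : j ≠ i, M j) ≤ centralizer (M i : Set G) :=
    iSup₂_le fun j hj y hy => mem_centralizer_iff.mpr fun x hx => (hcomm hj.symm x y hx hy).eq
  rw [disjoint_iff]
  refine hrad _ inferInstance (Group.isSolvable_of_comm fun a b => Subtype.ext ?_)
  exact mem_centralizer_iff.mp (hcent b.2.2) a a.2.1

variable [Fintype ι] [∀ i, (M i).Normal]

lemma noncommPiCoprod_conjNormal
    (hcomm : Pairwise fun i j => ∀ x y : G, x ∈ M i → y ∈ M j → Commute x y) (g : G)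
    (m : ∀ i, M i) :
    noncommPiCoprod hcomm (fun i => MulAut.conjNormal g (m i)) =
      g * noncommPiCoprod hcomm m * g⁻¹ := by
  rw [← MulAut.conj_apply, ← MulEquiv.coe_toMonoidHom, noncommPiCoprod_apply,
    noncommPiCoprod_apply]
  refine Eq.trans ?_ (Finset.map_noncommProd _ _ _ _).symm
  exact Finset.noncommProd_congr rfl (fun i _ => rfl) _

lemma exists_conjNormal_eq_of_isConj
    {hcomm : Pairwise fun i j => ∀ x y : G, x ∈ M i → y ∈ M j → Commute x y}
    (hinj : Function.Injective (noncommPiCoprod hcomm)) {m m' : ∀ i, M i}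
    (h : IsConj (noncommPiCoprod hcomm m) (noncommPiCoprod hcomm m')) :
    ∃ g : G, ∀ i, MulAut.conjNormal g (m i) = m' i := by
  obtain ⟨g, hg⟩ := isConj_iff.mp h
  exact ⟨g, congrFun (hinj ((noncommPiCoprod_conjNormal hcomm g m).trans hg))⟩

end MinimalNormal

theorem prod_choose_le_numConjClasses_general
    (G : Type) [Group G] [Finite G]
    (hrad : ∀ N : Subgroup G, N.Normal → IsSolvable N → N = ⊥)
    (r : ℕ) (M : Fin r → Subgroup G)
    (hmin : ∀ i, IsMinimalNormal (M i))
    (hinj : Function.Injective M)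
    (n : Fin r → ℕ) (T : Fin r → Type) [∀ i, Group (T i)] [∀ i, Finite (T i)]
    (hsimple : ∀ i, IsSimpleGroup (T i))
    (hnonab : ∀ i, ¬ ∀ a b : T i, a * b = b * a)
    (hiso : ∀ i, Nonempty ((M i) ≃* (Fin (n i) → T i))) :
    ∏ i, Nat.choose (n i + numAutOrbits (T i) - 1) (numAutOrbits (T i) - 1) ≤
      numConjClasses G := by
  have := fun i => (hmin i).normal
  let e i := (hiso i).some
  let φ := noncommPiCoprod (pairwise_commute_of_isMinimalNormal hmin hinj)
  have hφ : Function.Injective φ :=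
    injective_noncommPiCoprod_of_iSupIndep (iSupIndep_of_isMinimalNormal hrad hmin hinj)
  choose x hx using fun i (s : Sym (AutOrbits (T i)) (n i)) => exists_autProfile_eq s.1 s.2
  let Φ (s : ∀ i, Sym (AutOrbits (T i)) (n i)) : ConjClasses G :=
    ConjClasses.mk (φ fun i => (e i).symm (x i (s i)))
  have hΦ : Function.Injective Φ := by
    intro s s' hss'
    obtain ⟨g, hg⟩ :=
      exists_conjNormal_eq_of_isConj hφ (ConjClasses.mk_eq_mk_iff_isConj.mp hss')
    funext i
    have := hsimple i
    -- conjugation by `g` induces an automorphism of `T i ^ n i`, which preserves profiles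
    have hprof := autProfile_mulEquiv_apply (center_eq_bot_of_not_comm (hnonab i))
      (((e i).symm.trans (MulAut.conjNormal g)).trans (e i)) (x i (s i))
    simp only [MulEquiv.trans_apply, hg, MulEquiv.apply_symm_apply, hx] at hprof
    exact Subtype.ext hprof.symm
  calc ∏ i, (n i + numAutOrbits (T i) - 1).choose (numAutOrbits (T i) - 1)
      = Nat.card (∀ i, Sym (AutOrbits (T i)) (n i)) := by
        simp only [Nat.card_pi, natCard_sym_eq_choose_pred, numAutOrbits]
    _ ≤ numConjClasses G := Nat.card_le_card_of_injective Φ hΦ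

/-- Let `G` be a nontrivial finite group with trivial solvable radical, with distinct
minimal normal subgroups `M₁, …, M_r`, where `M i ≅ (T i)^(n i)` for nonabelian finite
simple groups `T i`, and let `k i = k*(T i)`. Then
`∏ i, C(n i + k i - 1, k i - 1) ≤ k(G)`. -/
theorem prod_choose_le_numConjClasses
    (G : Type) [Group G] [Finite G] [Nontrivial G]
    (hrad : ∀ N : Subgroup G, N.Normal → IsSolvable N → N = ⊥)
    (r : ℕ) (M : Fin r → Subgroup G)
    (hmin : ∀ i, IsMinimalNormal (M i))
    (hinj : Function.Injective M)
    (hall : ∀ N : Subgroup G, IsMinimalNormal N → ∃ i, N = M i)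
    (n : Fin r → ℕ) (T : Fin r → Type) [∀ i, Group (T i)] [∀ i, Finite (T i)]
    (hsimple : ∀ i, IsSimpleGroup (T i))
    (hnonab : ∀ i, ¬ ∀ a b : T i, a * b = b * a)
    (hiso : ∀ i, Nonempty ((M i) ≃* (Fin (n i) → T i))) :
    ∏ i, Nat.choose (n i + numAutOrbits (T i) - 1) (numAutOrbits (T i) - 1) ≤
      numConjClasses G :=
  prod_choose_le_numConjClasses_general G hrad r M hmin hinj n T hsimple hnonab hiso
end
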